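/- Let 0 < ℵ < 1, b > 0, and ℓ ∈ {0,1,…,6}. There is a constant C depending only on b and ℓ such that for all n ≥ 1 and all complex κ with |Im κ| < ℵ^n·b, |χ_n(κ) − χ_{n+1}(κ)| ≤ C·|ℵ^{−n}κ|^ℓ·exp(−½|ℵ^{−n}κ|^6), where χ_n(κ) = exp(−(ℵ^{−n}κ)^6). -/

import Mathlib

/-! With `z = ℵ^{-n} κ` we have `|Im z| ≤ b`, `χ_n(κ) = exp(-z⁶)` and `χ_{n+1}(κ) = exp(-ℵ^{-6} z⁶)`.
In the strip `|Im z| ≤ b` one has `Re z⁶ ≥ ¾|z|⁶ - O(b⁶)`, so the mean value theorem for `exp` on a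
half-plane bounds the difference by `(ℵ^{-6} - 1) e^{O(b⁶)} |z|⁶ e^{-¾|z|⁶}`; the surplus factor
`e^{-|z|⁶/4}` absorbs `|z|^{6-ℓ}`. -/

open Complex

noncomputable def chiC (al : ℝ) (n : ℕ) (κ : ℂ) : ℂ :=
  if n = 0 then 1 else Complex.exp (-(((al⁻¹ ^ n : ℝ) : ℂ) * κ) ^ 6)

theorem chiC_of_ne_zero {al : ℝ} {n : ℕ} (hn : n ≠ 0) (κ : ℂ) :
    chiC al n κ = cexp (-(((al⁻¹ ^ n : ℝ) : ℂ) * κ) ^ 6) :=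
  if_neg hn

theorem chiC_succ (al : ℝ) (n : ℕ) (κ : ℂ) :
    chiC al (n + 1) κ = cexp (-(((al⁻¹ ^ 6 : ℝ) : ℂ) * (((al⁻¹ ^ n : ℝ) : ℂ) * κ) ^ 6)) := by
  rw [chiC_of_ne_zero n.add_one_ne_zero]
  push_cast
  ring_nf

theorem norm_cexp_sub_cexp_le (u v : ℂ) :
    ‖cexp v - cexp u‖ ≤ Real.exp (max u.re v.re) * ‖v - u‖ := by
  refine (convex_halfSpace_re_le (max u.re v.re)).norm_image_sub_le_of_norm_deriv_le
    (fun _ _ => differentiableAt_exp) (fun x hx => ?_) (Set.mem_ofPred.mpr (le_max_left _ _))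
    (Set.mem_ofPred.mpr (le_max_right _ _))
  rw [Complex.deriv_exp, norm_exp]
  exact Real.exp_le_exp.mpr hx

theorem re_pow_six (z : ℂ) :
    (z ^ 6).re = normSq z ^ 3 - 18 * normSq z ^ 2 * z.im ^ 2 + 48 * normSq z * z.im ^ 4
      - 32 * z.im ^ 6 := by
  simp only [pow_succ, pow_zero, one_mul, mul_re, mul_im, normSq_apply]
  ring

theorem re_pow_six_ge {z : ℂ} {b : ℝ} (h : |z.im| ≤ b) :
    3 / 4 * ‖z‖ ^ 6 - 13856 * b ^ 6 ≤ (z ^ 6).re := by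
  have hnorm : ‖z‖ ^ 6 = normSq z ^ 3 := by rw [normSq_eq_norm_sq, ← pow_mul]
  have him : z.im ^ 2 ≤ b ^ 2 := sq_le_sq' (abs_le.mp h).1 (abs_le.mp h).2
  -- Young's inequality `18 s² B ≤ s³/4 + 13824 B³`, with equality at `s = 48 B`
  have young : 18 * normSq z ^ 2 * b ^ 2 ≤ normSq z ^ 3 / 4 + 13824 * (b ^ 2) ^ 3 := by
    nlinarith [mul_nonneg (sq_nonneg (normSq z - 48 * b ^ 2))
      (add_nonneg (normSq_nonneg z) (mul_nonneg (by norm_num : (0 : ℝ) ≤ 24) (sq_nonneg b)))]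
  rw [re_pow_six, hnorm]
  nlinarith [mul_le_mul_of_nonneg_left him (sq_nonneg (normSq z)), normSq_nonneg z,
    mul_nonneg (normSq_nonneg z) (pow_nonneg (sq_nonneg z.im) 2),
    pow_le_pow_left₀ (sq_nonneg z.im) him 3]

theorem norm_cexp_neg_sub_cexp_neg_mul_le {w : ℂ} {a K : ℝ} (ha : 1 ≤ a) (hK : 0 ≤ K)
    (hw : 3 / 4 * ‖w‖ - K ≤ w.re) :
    ‖cexp (-w) - cexp (-(a * w))‖
      ≤ (a - 1) * Real.exp (a * K) * (‖w‖ * Real.exp (-(3 / 4) * ‖w‖)) := by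
  have hmax : max (-w).re (-(a * w)).re ≤ a * K - 3 / 4 * ‖w‖ := by
    simp only [neg_re, re_ofReal_mul]
    refine max_le (by nlinarith) ?_
    nlinarith [norm_nonneg w]
  have hdiff : ‖-(a * w) - -w‖ = (a - 1) * ‖w‖ := by
    rw [show -(a * w) - -w = ((1 - a : ℝ) : ℂ) * w by push_cast; ring, norm_mul, norm_real,
      Real.norm_of_nonpos (by linarith), neg_sub]
  calc ‖cexp (-w) - cexp (-(a * w))‖
      ≤ Real.exp (a * K - 3 / 4 * ‖w‖) * ((a - 1) * ‖w‖) := by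
        rw [norm_sub_rev, ← hdiff]
        exact (norm_cexp_sub_cexp_le _ _).trans (by gcongr)
    _ = (a - 1) * Real.exp (a * K) * (‖w‖ * Real.exp (-(3 / 4) * ‖w‖)) := by
        rw [sub_eq_add_neg, Real.exp_add]; ring_nf

theorem pow_mul_exp_neg_le {r : ℝ} (hr : 0 ≤ r) {ℓ m : ℕ} (hℓ : ℓ ≤ m) :
    r ^ m * Real.exp (-(3 / 4) * r ^ m) ≤ 4 * r ^ ℓ * Real.exp (-(1 / 2) * r ^ m) := by
  have hsplit : r ^ m = r ^ ℓ * r ^ (m - ℓ) := by rw [← pow_add, Nat.add_sub_cancel' hℓ]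
  have hpow : r ^ (m - ℓ) ≤ 1 + r ^ m := by
    rcases le_or_gt r 1 with h | h
    · linarith [pow_le_one₀ hr h (n := m - ℓ), pow_nonneg hr m]
    · linarith [pow_le_pow_right₀ h.le (Nat.sub_le m ℓ)]
  have hexp : 1 + r ^ m ≤ 4 * Real.exp (r ^ m / 4) := by
    linarith [Real.add_one_le_exp (r ^ m / 4)]
  calc r ^ m * Real.exp (-(3 / 4) * r ^ m)
      = r ^ ℓ * (r ^ (m - ℓ) * Real.exp (-(r ^ m / 4))) * Real.exp (-(1 / 2) * r ^ m) := by
        rw [← mul_assoc, ← hsplit, mul_assoc, ← Real.exp_add]; ring_nf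
    _ ≤ r ^ ℓ * 4 * Real.exp (-(1 / 2) * r ^ m) := by
        gcongr
        rw [Real.exp_neg, ← div_eq_mul_inv, div_le_iff₀ (Real.exp_pos _)]
        exact hpow.trans hexp
    _ = 4 * r ^ ℓ * Real.exp (-(1 / 2) * r ^ m) := by ring

theorem chi_difference_bound_general (al b : ℝ) (hal : 0 < al) (hal1 : al < 1)
    (ℓ : ℕ) (hℓ : ℓ ≤ 6) :
    ∃ C > 0, ∀ n : ℕ, 1 ≤ n → ∀ κ : ℂ, |κ.im| < al ^ n * b →
      ‖chiC al n κ - chiC al (n + 1) κ‖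
        ≤ C * ‖((al⁻¹ ^ n : ℝ) : ℂ) * κ‖ ^ ℓ
            * Real.exp (-(1 / 2) * ‖((al⁻¹ ^ n : ℝ) : ℂ) * κ‖ ^ 6) := by
  set a : ℝ := al⁻¹ ^ 6
  have ha : 1 < a := one_lt_pow₀ ((one_lt_inv₀ hal).mpr hal1) (by norm_num)
  set K : ℝ := 13856 * b ^ 6
  refine ⟨(a - 1) * Real.exp (a * K) * 4, by have := sub_pos.mpr ha; positivity,
    fun n hn κ hκ => ?_⟩
  set z : ℂ := ((al⁻¹ ^ n : ℝ) : ℂ) * κ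
  have hz : |z.im| ≤ b := by
    rw [im_ofReal_mul, abs_mul, abs_of_pos (by positivity)]
    calc al⁻¹ ^ n * |κ.im| ≤ al⁻¹ ^ n * (al ^ n * b) := by gcongr
      _ = b := by rw [← mul_assoc, ← mul_pow, inv_mul_cancel₀ hal.ne', one_pow, one_mul]
  have hre : 3 / 4 * ‖z ^ 6‖ - K ≤ (z ^ 6).re := by
    simpa only [norm_pow] using re_pow_six_ge hz
  rw [chiC_of_ne_zero (by omega), chiC_succ]
  calc _ ≤ (a - 1) * Real.exp (a * K) * (‖z ^ 6‖ * Real.exp (-(3 / 4) * ‖z ^ 6‖)) :=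
        norm_cexp_neg_sub_cexp_neg_mul_le ha.le (by positivity) hre
    _ ≤ (a - 1) * Real.exp (a * K) * (4 * ‖z‖ ^ ℓ * Real.exp (-(1 / 2) * ‖z‖ ^ 6)) := by
        have := sub_pos.mpr ha
        rw [norm_pow]
        exact mul_le_mul_of_nonneg_left (pow_mul_exp_neg_le (norm_nonneg z) hℓ) (by positivity)
    _ = _ := by ring

/-- For `0 < ℵ < 1`, `b > 0` and `ℓ ≤ 6` there is a constant `C = C(b,ℓ)` such that for
all `n ≥ 1` and `|Im κ| < ℵⁿ b`,
`|χ_n(κ) - χ_{n+1}(κ)| ≤ C |ℵ^{-n}κ|^ℓ exp(-½|ℵ^{-n}κ|⁶)`. -/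
theorem chi_difference_bound (al b : ℝ) (hal : 0 < al) (hal1 : al < 1) (hb : 0 < b)
    (ℓ : ℕ) (hℓ : ℓ ≤ 6) :
    ∃ C > 0, ∀ n : ℕ, 1 ≤ n → ∀ κ : ℂ, |κ.im| < al ^ n * b →
      ‖chiC al n κ - chiC al (n + 1) κ‖
        ≤ C * ‖((al⁻¹ ^ n : ℝ) : ℂ) * κ‖ ^ ℓ
            * Real.exp (-(1 / 2) * ‖((al⁻¹ ^ n : ℝ) : ℂ) * κ‖ ^ 6) :=
  chi_difference_bound_general al b hal hal1 ℓ hℓ
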